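/- Let K be a field, S = K[x_1, ..., x_n] with n ≥ 2, and I ⊆ S a squarefree monomial ideal. For k ∈ {0, 1} let I_k ⊆ K[x_1, ..., x_{n-1}] be the monomial ideal with I ∩ x_n^k K[x_1, ..., x_{n-1}] = x_n^k I_k. Suppose I_0 ≠ I_1, I_0 ≠ 0, and I_0 = ⊕_{i=1}^{r_0} u_i K[Z_i] and I_1 = ⊕_{j=1}^{r_1} v_j K[W_j] are squarefree Stanley decompositions (with Z_i, W_j ⊆ {x_1, ..., x_{n-1}}). Then I = (⊕_{i=1}^{r_0} u_i K[Z_i]) ⊕ (⊕_{j=1}^{r_1} v_j x_n K[W_j ∪ {x_n}]) is a squarefree Stanley decomposition of I. -/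

import Mathlib

open MvPolynomial

/-- The Stanley space `u K[Z]`: the `K`-span of all monomials `u * v` where `v` is a
monomial in the variables of `Z`; the monomial `u` is given by its exponent vector `d`. -/
noncomputable def stanleySpace (K : Type*) [Field K] {σ : Type*} (d : σ →₀ ℕ)
    (Z : Finset σ) : Submodule K (MvPolynomial σ K) :=
  Submodule.span K
    {m | ∃ e : σ →₀ ℕ, (e.support : Set σ) ⊆ (Z : Set σ) ∧ m = monomial (d + e) (1 : K)}

/-- A monomial ideal: an ideal generated by monomials. -/
def IsMonomialIdeal {K : Type*} [Field K] {σ : Type*}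
    (I : Ideal (MvPolynomial σ K)) : Prop :=
  ∃ G : Set (σ →₀ ℕ), I = Ideal.span ((fun d => monomial d (1 : K)) '' G)

/-- A squarefree monomial ideal: an ideal generated by squarefree monomials. -/
def IsSquarefreeMonomialIdeal {K : Type*} [Field K] {σ : Type*}
    (I : Ideal (MvPolynomial σ K)) : Prop :=
  ∃ G : Set (σ →₀ ℕ), (∀ d ∈ G, ∀ i, d i ≤ 1) ∧
    I = Ideal.span ((fun d => monomial d (1 : K)) '' G)

/-- `I^c`: the `K`-span of all monomials not belonging to `I`. -/
noncomputable def compSpan (K : Type*) [Field K] {σ : Type*}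
    (I : Ideal (MvPolynomial σ K)) : Submodule K (MvPolynomial σ K) :=
  Submodule.span K
    {m | ∃ d : σ →₀ ℕ, monomial d (1 : K) ∉ I ∧ m = monomial d (1 : K)}

/-- `x_n^k V ⊆ S`: the image in `S = K[x_1,…,x_n]` of a `K`-subspace
`V ⊆ S' = K[x_1,…,x_{n-1}]` under inclusion followed by multiplication by `x_n^k`. -/
noncomputable def shiftUp (K : Type*) [Field K] (n : ℕ) (k : ℕ)
    (V : Submodule K (MvPolynomial (Fin n) K)) :
    Submodule K (MvPolynomial (Fin (n + 1)) K) :=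
  (V.map (rename (Fin.castSucc : Fin n → Fin (n + 1)) :
      MvPolynomial (Fin n) K →ₐ[K] MvPolynomial (Fin (n + 1)) K).toLinearMap).map
    (LinearMap.mulLeft K ((X (Fin.last n) : MvPolynomial (Fin (n + 1)) K) ^ k))

/-- The exponent vector of `u · x_{n+1}^k`, where `u` is a monomial of
`S' = K[x_1,…,x_n]` with exponent vector `d`. -/
noncomputable def shiftExp (n : ℕ) (k : ℕ) (d : Fin n →₀ ℕ) : Fin (n + 1) →₀ ℕ :=
  Finsupp.mapDomain (Fin.castSucc : Fin n → Fin (n + 1)) d + Finsupp.single (Fin.last n) k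

/-!
Every subspace involved is spanned by the monomials it contains, so the statement is one about
exponent sets: `restrictSupport` turns direct sums into disjoint unions. An exponent `b` with
`b (last n) = 0` lies in `I` iff its truncation lies in `I₀`. If `b (last n) ≥ 1`, squarefreeness
lets us lower `b (last n)` to `1`, so `b` lies in `I` iff its truncation lies in `I₁`. The lifted
cones of the `u_i K[Z_i]` therefore partition the first kind of exponents of `I`, and those of the
`v_j x_{n+1} K[W_j ∪ {x_{n+1}}]` the second kind.
-/

section RestrictSupport

open Function

variable {R σ ι : Type*} [CommSemiring R]

theorem restrictSupport_eq_symm_orderIsoMapComap (s : Set (σ →₀ ℕ)) :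
    restrictSupport R s = (Submodule.orderIsoMapComap (AddMonoidAlgebra.coeffLinearEquiv R)).symm
      (Finsupp.supported R R s) :=
  rfl

theorem iSup_restrictSupport (s : ι → Set (σ →₀ ℕ)) :
    ⨆ i, restrictSupport R (s i) = restrictSupport R (⋃ i, s i) := by
  simp only [restrictSupport_eq_symm_orderIsoMapComap, ← OrderIso.map_iSup,
    Finsupp.supported_iUnion]

theorem iSupIndep_restrictSupport_iff [Nontrivial R] {s : ι → Set (σ →₀ ℕ)} :
    iSupIndep (fun i => restrictSupport R (s i)) ↔ Pairwise (Disjoint on s) := by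
  refine (iSupIndep_map_orderIso_iff
    (Submodule.orderIsoMapComap (AddMonoidAlgebra.coeffLinearEquiv R)).symm
    (a := fun i => Finsupp.supported R R (s i))).trans ?_
  rw [← iSupIndep_iff_pairwiseDisjoint, iSupIndep_def, iSupIndep_def]
  simp only [iSup_subtype', ← Finsupp.supported_iUnion]
  exact forall_congr' fun i => Finsupp.disjoint_supported_supported_iff

theorem setOf_monomial_mem_restrictSupport [Nontrivial R] (s : Set (σ →₀ ℕ)) :
    {b | monomial b (1 : R) ∈ restrictSupport R s} = s := by
  ext b
  simp [monomial_mem_restrictSupport]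

theorem monomial_mem_ideal_span_monomial_image_iff [Nontrivial R] {G : Set (σ →₀ ℕ)}
    {b : σ →₀ ℕ} :
    monomial b (1 : R) ∈ Ideal.span ((fun d => monomial d (1 : R)) '' G) ↔ ∃ g ∈ G, g ≤ b := by
  classical
  simp [mem_ideal_span_monomial_image, support_monomial]

end RestrictSupport

section MonomialIdeal

variable {K σ : Type*} [Field K] {I : Ideal (MvPolynomial σ K)}

theorem IsMonomialIdeal.restrictScalars_eq_restrictSupport (hI : IsMonomialIdeal I) :
    I.restrictScalars K = restrictSupport K {b | monomial b (1 : K) ∈ I} := by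
  obtain ⟨G, rfl⟩ := hI
  ext p
  simp only [mem_restrictSupport_iff, Set.subset_def, Finset.mem_coe, Set.mem_ofPred_eq,
    monomial_mem_ideal_span_monomial_image_iff]
  exact mem_ideal_span_monomial_image

theorem IsSquarefreeMonomialIdeal.isMonomialIdeal (hI : IsSquarefreeMonomialIdeal I) :
    IsMonomialIdeal I :=
  let ⟨G, _, hG⟩ := hI
  ⟨G, hG⟩

theorem Finsupp.le_iff_support_subset_of_le_one {g b : σ →₀ ℕ} (hg : ∀ i, g i ≤ 1) :
    g ≤ b ↔ g.support ⊆ b.support := by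
  simp only [Finsupp.le_def, Finset.subset_iff, Finsupp.mem_support_iff]
  exact forall_congr' fun i => by have := hg i; omega

theorem IsSquarefreeMonomialIdeal.monomial_mem_iff_of_support_eq
    (hI : IsSquarefreeMonomialIdeal I) {b b' : σ →₀ ℕ} (h : b.support = b'.support) :
    monomial b (1 : K) ∈ I ↔ monomial b' (1 : K) ∈ I := by
  obtain ⟨G, hG, rfl⟩ := hI
  simp only [monomial_mem_ideal_span_monomial_image_iff]
  refine exists_congr fun g => and_congr_right fun hg => ?_
  rw [Finsupp.le_iff_support_subset_of_le_one (hG g hg),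
    Finsupp.le_iff_support_subset_of_le_one (hG g hg), h]

end MonomialIdeal

section StanleyCone

variable {σ : Type*}

def stanleyCone (d : σ →₀ ℕ) (Z : Finset σ) : Set (σ →₀ ℕ) :=
  {b | d ≤ b ∧ ∀ i ∉ Z, b i = d i}

theorem stanleySpace_eq_restrictSupport (K : Type*) [Field K] (d : σ →₀ ℕ) (Z : Finset σ) :
    stanleySpace K d Z = restrictSupport K (stanleyCone d Z) := by
  rw [restrictSupport_eq_span, stanleySpace]
  congr 1
  ext m
  constructor
  · rintro ⟨e, he, rfl⟩
    refine ⟨d + e, ⟨le_self_add, fun i hi => ?_⟩, rfl⟩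
    simpa using Finsupp.notMem_support_iff.1 fun h => hi (he h)
  · rintro ⟨b, ⟨hdb, hZ⟩, rfl⟩
    refine ⟨b - d, fun i hi => by_contra fun hiZ => ?_, by rw [add_tsub_cancel_of_le hdb]⟩
    simp [hZ i hiZ] at hi

end StanleyCone

section LastVariable

open Fin

variable {n : ℕ}

noncomputable def dropLast (b : Fin (n + 1) →₀ ℕ) : Fin n →₀ ℕ :=
  Finsupp.comapDomain castSucc b (castSucc_injective n).injOn

@[simp] theorem dropLast_apply (b : Fin (n + 1) →₀ ℕ) (i : Fin n) :
    dropLast b i = b i.castSucc :=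
  rfl

@[simp] theorem shiftExp_castSucc (k : ℕ) (d : Fin n →₀ ℕ) (i : Fin n) :
    shiftExp n k d i.castSucc = d i := by
  simp [shiftExp, Finsupp.mapDomain_apply (castSucc_injective n), castSucc_ne_last]

@[simp] theorem shiftExp_last (k : ℕ) (d : Fin n →₀ ℕ) : shiftExp n k d (last n) = k := by
  simp [shiftExp, Finsupp.mapDomain_of_notMem_range]

theorem shiftExp_dropLast (b : Fin (n + 1) →₀ ℕ) : shiftExp n (b (last n)) (dropLast b) = b := by
  ext j
  cases j using lastCases <;> simp

theorem shiftExp_le_one {k : ℕ} {d : Fin n →₀ ℕ} (hk : k ≤ 1) (hd : ∀ i, d i ≤ 1)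
    (j : Fin (n + 1)) : shiftExp n k d j ≤ 1 := by
  cases j using lastCases <;> simp [hk, hd]

theorem support_shiftExp_zero (d : Fin n →₀ ℕ) :
    (shiftExp n 0 d).support = d.support.image castSucc := by
  rw [shiftExp, Finsupp.single_zero, add_zero,
    Finsupp.mapDomain_support_of_injective (castSucc_injective n)]

theorem support_shiftExp_subset (k : ℕ) (d : Fin n →₀ ℕ) :
    (shiftExp n k d).support ⊆ insert (last n) (d.support.image castSucc) := by
  intro j hj
  cases j using lastCases <;> simp_all

theorem stanleyCone_shiftExp_zero (d : Fin n →₀ ℕ) (Z : Finset (Fin n)) :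
    stanleyCone (shiftExp n 0 d) (Z.image castSucc) =
      {b | b (last n) = 0} ∩ dropLast ⁻¹' stanleyCone d Z := by
  ext b
  simp [stanleyCone, Finsupp.le_def, forall_fin_succ', castSucc_ne_last]
  tauto

theorem stanleyCone_shiftExp_one (d : Fin n →₀ ℕ) (Z : Finset (Fin n)) :
    stanleyCone (shiftExp n 1 d) (insert (last n) (Z.image castSucc)) =
      {b | 1 ≤ b (last n)} ∩ dropLast ⁻¹' stanleyCone d Z := by
  ext b
  simp [stanleyCone, Finsupp.le_def, forall_fin_succ', castSucc_ne_last]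
  tauto

variable {K : Type*} [Field K]

theorem X_last_pow_mul_rename_monomial (k : ℕ) (d : Fin n →₀ ℕ) :
    (X (last n) : MvPolynomial (Fin (n + 1)) K) ^ k * rename castSucc (monomial d (1 : K)) =
      monomial (shiftExp n k d) 1 := by
  rw [rename_monomial, X_pow_eq_monomial, monomial_mul, one_mul, shiftExp,
    add_comm (Finsupp.single _ _)]

theorem monomial_shiftExp_mem_shiftUp_iff {k : ℕ} {V : Submodule K (MvPolynomial (Fin n) K)}
    {d : Fin n →₀ ℕ} :
    monomial (shiftExp n k d) (1 : K) ∈ shiftUp K n k V ↔ monomial d (1 : K) ∈ V := by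
  have hinj : Function.Injective fun q : MvPolynomial (Fin n) K =>
      (X (last n) : MvPolynomial (Fin (n + 1)) K) ^ k * rename castSucc q :=
    fun p q h => rename_injective _ (castSucc_injective n)
      (mul_left_cancel₀ (pow_ne_zero k (X_ne_zero _)) h)
  simp only [shiftUp, Submodule.mem_map, LinearMap.mulLeft_apply, AlgHom.toLinearMap_apply,
    ← X_last_pow_mul_rename_monomial]
  constructor
  · rintro ⟨_, ⟨q, hq, rfl⟩, h⟩
    rwa [← hinj h]
  · exact fun h => ⟨_, ⟨_, h, rfl⟩, rfl⟩

theorem monomial_shiftExp_mem_iff_of_inf_shiftUp_eq {k : ℕ}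
    {I : Ideal (MvPolynomial (Fin (n + 1)) K)} {V : Submodule K (MvPolynomial (Fin n) K)}
    (h : I.restrictScalars K ⊓ shiftUp K n k ⊤ = shiftUp K n k V) (d : Fin n →₀ ℕ) :
    monomial (shiftExp n k d) (1 : K) ∈ I ↔ monomial d (1 : K) ∈ V := by
  rw [← monomial_shiftExp_mem_shiftUp_iff, ← h, Submodule.mem_inf,
    monomial_shiftExp_mem_shiftUp_iff]
  simp

theorem setOf_monomial_mem_eq_of_slices {I : Ideal (MvPolynomial (Fin (n + 1)) K)}
    (hI : IsSquarefreeMonomialIdeal I) {V₀ V₁ : Submodule K (MvPolynomial (Fin n) K)}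
    (h₀ : I.restrictScalars K ⊓ shiftUp K n 0 ⊤ = shiftUp K n 0 V₀)
    (h₁ : I.restrictScalars K ⊓ shiftUp K n 1 ⊤ = shiftUp K n 1 V₁) :
    {b | monomial b (1 : K) ∈ I} =
      {b | b (last n) = 0} ∩ dropLast ⁻¹' {d | monomial d (1 : K) ∈ V₀} ∪
        {b | 1 ≤ b (last n)} ∩ dropLast ⁻¹' {d | monomial d (1 : K) ∈ V₁} := by
  ext b
  obtain hb | hb := Nat.eq_zero_or_pos (b (last n))
  · have := monomial_shiftExp_mem_iff_of_inf_shiftUp_eq h₀ (dropLast b)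
    rw [← hb, shiftExp_dropLast] at this
    simp [this, hb]
  · have hsupp : b.support = (shiftExp n 1 (dropLast b)).support := by
      conv_lhs => rw [← shiftExp_dropLast b]
      ext j
      cases j using lastCases <;> simp [hb.ne']
    simp [hI.monomial_mem_iff_of_support_eq hsupp,
      monomial_shiftExp_mem_iff_of_inf_shiftUp_eq h₁, Nat.one_le_iff_ne_zero, hb.ne']

end LastVariable

open Function in
theorem pairwise_disjoint_sumElim {α ι κ : Type*} [PartialOrder α] [OrderBot α] {s : ι → α}
    {t : κ → α} (hs : Pairwise (Disjoint on s)) (ht : Pairwise (Disjoint on t))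
    (hst : ∀ i j, Disjoint (s i) (t j)) : Pairwise (Disjoint on Sum.elim s t) := by
  rintro (i | j) (i' | j') h
  · exact hs (ne_of_apply_ne Sum.inl h)
  · exact hst i j'
  · exact (hst i' j).symm
  · exact ht (ne_of_apply_ne Sum.inr h)

theorem Sum.apply_elim {α β γ δ : Type*} (f : γ → δ) (g : α → γ) (h : β → γ) (x : α ⊕ β) :
    f (Sum.elim g h x) = Sum.elim (fun a => f (g a)) (fun b => f (h b)) x := by
  cases x <;> rfl

-- Here `S = K[x_1, …, x_{n+1}]`: the `n` of the informal statement is `n + 1`.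
theorem janet_squarefree_stanley_decomposition_general (K : Type*) [Field K] (n : ℕ)
    (I : Ideal (MvPolynomial (Fin (n + 1)) K)) (hI : IsSquarefreeMonomialIdeal I)
    (I0 I1 : Ideal (MvPolynomial (Fin n) K))
    (hI0 : Submodule.restrictScalars K I ⊓ shiftUp K n 0 ⊤ =
      shiftUp K n 0 (Submodule.restrictScalars K I0))
    (hI1 : Submodule.restrictScalars K I ⊓ shiftUp K n 1 ⊤ =
      shiftUp K n 1 (Submodule.restrictScalars K I1))
    (r0 r1 : ℕ) (u : Fin r0 → (Fin n →₀ ℕ)) (Z : Fin r0 → Finset (Fin n))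
    (v : Fin r1 → (Fin n →₀ ℕ)) (W : Fin r1 → Finset (Fin n))
    (hu : ∀ i, (∀ j, u i j ≤ 1) ∧ (u i).support ⊆ Z i)
    (hv : ∀ i, (∀ j, v i j ≤ 1) ∧ (v i).support ⊆ W i)
    (hdec0 : iSupIndep (fun i => stanleySpace K (u i) (Z i)) ∧
      (⨆ i, stanleySpace K (u i) (Z i)) = Submodule.restrictScalars K I0)
    (hdec1 : iSupIndep (fun j => stanleySpace K (v j) (W j)) ∧
      (⨆ j, stanleySpace K (v j) (W j)) = Submodule.restrictScalars K I1) :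
    (∀ i : Fin r0, (∀ j, shiftExp n 0 (u i) j ≤ 1) ∧
      (shiftExp n 0 (u i)).support ⊆ (Z i).image Fin.castSucc) ∧
    (∀ j : Fin r1, (∀ l, shiftExp n 1 (v j) l ≤ 1) ∧
      (shiftExp n 1 (v j)).support ⊆ insert (Fin.last n) ((W j).image Fin.castSucc)) ∧
    iSupIndep (fun x : Fin r0 ⊕ Fin r1 =>
      Sum.elim
        (fun i => stanleySpace K (shiftExp n 0 (u i)) ((Z i).image Fin.castSucc))
        (fun j => stanleySpace K (shiftExp n 1 (v j))
          (insert (Fin.last n) ((W j).image Fin.castSucc))) x) ∧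
    (⨆ x : Fin r0 ⊕ Fin r1,
      Sum.elim
        (fun i => stanleySpace K (shiftExp n 0 (u i)) ((Z i).image Fin.castSucc))
        (fun j => stanleySpace K (shiftExp n 1 (v j))
          (insert (Fin.last n) ((W j).image Fin.castSucc))) x) =
      Submodule.restrictScalars K I := by
  obtain ⟨hindep0, hsup0⟩ := hdec0
  obtain ⟨hindep1, hsup1⟩ := hdec1
  simp only [stanleySpace_eq_restrictSupport, ← Sum.apply_elim (restrictSupport K),
    iSupIndep_restrictSupport_iff, iSup_restrictSupport, Set.iUnion_sumElim,
    stanleyCone_shiftExp_zero, stanleyCone_shiftExp_one] at hindep0 hindep1 hsup0 hsup1 ⊢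
  rw [hI.isMonomialIdeal.restrictScalars_eq_restrictSupport,
    setOf_monomial_mem_eq_of_slices hI hI0 hI1, ← hsup0, ← hsup1,
    setOf_monomial_mem_restrictSupport, setOf_monomial_mem_restrictSupport]
  refine ⟨fun i => ⟨shiftExp_le_one zero_le_one (hu i).1, ?_⟩,
    fun j => ⟨shiftExp_le_one le_rfl (hv j).1, ?_⟩,
    pairwise_disjoint_sumElim (fun i i' h => ?_) (fun j j' h => ?_) fun i j => ?_,
    by simp only [Set.preimage_iUnion, Set.inter_iUnion]⟩
  · exact (support_shiftExp_zero _).trans_subset (Finset.image_subset_image (hu i).2)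
  · exact (support_shiftExp_subset 1 _).trans
      (Finset.insert_subset_insert _ (Finset.image_subset_image (hv j).2))
  · exact (((hindep0 h).preimage dropLast).inter_left' _).inter_right' _
  · exact (((hindep1 h).preimage dropLast).inter_left' _).inter_right' _
  · refine Disjoint.mono Set.inter_subset_left Set.inter_subset_left ?_
    exact Set.disjoint_left.2 fun b (h0 : b _ = 0) (h1 : 1 ≤ b _) => by omega

/-- (Here `S = K[x_1,…,x_{n+1}]`, `S' = K[x_1,…,x_n]`, `n ≥ 1`.) Let
`I ⊆ S` be a squarefree monomial ideal with slices `I_0 ≠ I_1`, `I_0 ≠ 0` (determined by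
`I ∩ x_{n+1}^k S' = x_{n+1}^k I_k` for `k ∈ {0,1}`). Given squarefree Stanley
decompositions `I_0 = ⊕_i u_i K[Z_i]` and `I_1 = ⊕_j v_j K[W_j]`, the decomposition
`I = (⊕_i u_i K[Z_i]) ⊕ (⊕_j v_j x_{n+1} K[W_j ∪ {x_{n+1}}])` is a squarefree Stanley
decomposition of `I`. -/
theorem janet_squarefree_stanley_decomposition (K : Type*) [Field K] (n : ℕ) (hn : 1 ≤ n)
    (I : Ideal (MvPolynomial (Fin (n + 1)) K)) (hI : IsSquarefreeMonomialIdeal I)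
    (I0 I1 : Ideal (MvPolynomial (Fin n) K))
    (hI0 : Submodule.restrictScalars K I ⊓ shiftUp K n 0 ⊤ =
      shiftUp K n 0 (Submodule.restrictScalars K I0))
    (hI1 : Submodule.restrictScalars K I ⊓ shiftUp K n 1 ⊤ =
      shiftUp K n 1 (Submodule.restrictScalars K I1))
    (hne : I0 ≠ I1) (h0ne : I0 ≠ ⊥)
    (r0 r1 : ℕ) (u : Fin r0 → (Fin n →₀ ℕ)) (Z : Fin r0 → Finset (Fin n))
    (v : Fin r1 → (Fin n →₀ ℕ)) (W : Fin r1 → Finset (Fin n))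
    (hu : ∀ i, (∀ j, u i j ≤ 1) ∧ (u i).support ⊆ Z i)
    (hv : ∀ i, (∀ j, v i j ≤ 1) ∧ (v i).support ⊆ W i)
    (hdec0 : iSupIndep (fun i => stanleySpace K (u i) (Z i)) ∧
      (⨆ i, stanleySpace K (u i) (Z i)) = Submodule.restrictScalars K I0)
    (hdec1 : iSupIndep (fun j => stanleySpace K (v j) (W j)) ∧
      (⨆ j, stanleySpace K (v j) (W j)) = Submodule.restrictScalars K I1) :
    (∀ i : Fin r0, (∀ j, shiftExp n 0 (u i) j ≤ 1) ∧
      (shiftExp n 0 (u i)).support ⊆ (Z i).image Fin.castSucc) ∧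
    (∀ j : Fin r1, (∀ l, shiftExp n 1 (v j) l ≤ 1) ∧
      (shiftExp n 1 (v j)).support ⊆ insert (Fin.last n) ((W j).image Fin.castSucc)) ∧
    iSupIndep (fun x : Fin r0 ⊕ Fin r1 =>
      Sum.elim
        (fun i => stanleySpace K (shiftExp n 0 (u i)) ((Z i).image Fin.castSucc))
        (fun j => stanleySpace K (shiftExp n 1 (v j))
          (insert (Fin.last n) ((W j).image Fin.castSucc))) x) ∧
    (⨆ x : Fin r0 ⊕ Fin r1,
      Sum.elim
        (fun i => stanleySpace K (shiftExp n 0 (u i)) ((Z i).image Fin.castSucc))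
        (fun j => stanleySpace K (shiftExp n 1 (v j))
          (insert (Fin.last n) ((W j).image Fin.castSucc))) x) =
      Submodule.restrictScalars K I :=
  janet_squarefree_stanley_decomposition_general K n I hI I0 I1 hI0 hI1 r0 r1 u Z v W hu hv hdec0
    hdec1
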